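/- Let F_q be a finite field with q elements and let V be an n-dimensional vector space over F_q with n ≥ 2. If W is a subspace of V with dim W = k and 1 ≤ k ≤ n − 1, then the degree of W as a vertex of In(V) equals ∑_{i=1}^{k−1} [k choose i]_q + ∑_{i=1}^{n−k−1} [n−k choose i]_q, where [m choose i]_q = ((q^m − 1)(q^{m−1} − 1)⋯(q^{m−i+1} − 1)) / ((q^i − 1)(q^{i−1} − 1)⋯(q − 1)) is the Gaussian binomial coefficient counting i-dimensional subspaces of an m-dimensional space over F_q. -/

import Mathlib

/-- The vertex type of the subspace inclusion graph: nontrivial proper subspaces. -/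
abbrev InVert (F V : Type*) [Field F] [AddCommGroup V] [Module F V] :=
  {W : Submodule F V // W ≠ ⊥ ∧ W ≠ ⊤}

/-- The subspace inclusion graph `In(V)`: vertices are the nontrivial proper subspaces
of `V`, two of them being adjacent iff one is properly contained in the other. -/
def inclGraph (F V : Type*) [Field F] [AddCommGroup V] [Module F V] :
    SimpleGraph (InVert F V) where
  Adj W₁ W₂ := W₁.1 < W₂.1 ∨ W₂.1 < W₁.1
  symm := ⟨fun _ _ h => h.symm⟩
  loopless := ⟨fun _ h => Or.elim h (lt_irrefl _) (lt_irrefl _)⟩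

/-- The degree of a subspace `W` as a vertex of `In(V)`: the number of nontrivial
proper subspaces comparable with (hence adjacent to) `W`. -/
noncomputable def inDegree (F : Type*) {V : Type*} [Field F] [AddCommGroup V] [Module F V]
    (W : Submodule F V) : ℕ :=
  Nat.card {U : Submodule F V // (U ≠ ⊥ ∧ U ≠ ⊤) ∧ (U < W ∨ W < U)}

/-- The Gaussian binomial coefficient
`[m choose i]_q = ((q^m − 1)(q^{m−1} − 1)⋯(q^{m−i+1} − 1)) / ((q^i − 1)⋯(q − 1))`. -/
noncomputable def gaussBinom (q m i : ℕ) : ℚ :=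
  (∏ j ∈ Finset.range i, ((q : ℚ) ^ (m - j) - 1)) /
    (∏ j ∈ Finset.range i, ((q : ℚ) ^ (j + 1) - 1))

/-!
A nontrivial proper subspace comparable with `W` is either a nontrivial proper subspace of `W` or,
by the correspondence theorem, the preimage of one of `V ⧸ W`; so the degree of `W` is the number of
nontrivial proper subspaces of a `k`- and of an `(n - k)`-dimensional space. The `i`-dimensional
subspaces of an `m`-dimensional space are counted by double counting linearly independent
`i`-tuples: there are `∏_{j<i} (q^m - q^j)` of them, each spans an `i`-dimensional subspace, and
each such subspace contains `∏_{j<i} (q^i - q^j)` of them.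
-/

open Module Finset

theorem nat_card_subtype_mem_eq_sum {ι κ : Type*} [Finite ι] (f : ι → κ) (s : Finset κ) :
    Nat.card {x // f x ∈ s} = ∑ b ∈ s, Nat.card {x // f x = b} := by
  classical
  have := Fintype.ofFinite ι
  simp only [Nat.card_eq_fintype_card, Fintype.card_subtype]
  rw [card_eq_sum_card_fiberwise (f := f) (t := s) fun x hx => by simpa using hx]
  refine sum_congr rfl fun b hb => ?_
  rw [filter_filter]
  exact congrArg card (filter_congr fun x _ => by grind)

section NontrivialElements

variable {α β : Type*} [PartialOrder α] [BoundedOrder α] [PartialOrder β] [BoundedOrder β]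

theorem OrderIso.nat_card_ne_bot_and_ne_top (e : α ≃o β) :
    Nat.card {x : α // x ≠ ⊥ ∧ x ≠ ⊤} = Nat.card {y : β // y ≠ ⊥ ∧ y ≠ ⊤} :=
  Nat.card_congr (e.toEquiv.subtypeEquiv fun x => by simp)

def ltNeBotEquivIic (a : α) :
    {x : α // x < a ∧ x ≠ ⊥} ≃ {y : Set.Iic a // y ≠ ⊥ ∧ y ≠ ⊤} where
  toFun x := ⟨⟨x.1, x.2.1.le⟩, fun h => x.2.2 (congrArg Subtype.val h),
    fun h => x.2.1.ne (congrArg Subtype.val h)⟩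
  invFun y := ⟨y.1, lt_of_le_of_ne y.1.2 fun h => y.2.2 (Subtype.ext h),
    fun h => y.2.1 (Subtype.ext h)⟩
  left_inv _ := rfl
  right_inv _ := rfl

def gtNeTopEquivIci (a : α) :
    {x : α // a < x ∧ x ≠ ⊤} ≃ {y : Set.Ici a // y ≠ ⊥ ∧ y ≠ ⊤} where
  toFun x := ⟨⟨x.1, x.2.1.le⟩, fun h => x.2.1.ne' (congrArg Subtype.val h),
    fun h => x.2.2 (congrArg Subtype.val h)⟩
  invFun y := ⟨y.1, lt_of_le_of_ne y.1.2 fun h => y.2.1 (Subtype.ext h.symm),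
    fun h => y.2.2 (Subtype.ext h)⟩
  left_inv _ := rfl
  right_inv _ := rfl

theorem nat_card_comparable_ne_bot_and_ne_top [Finite α] (a : α) :
    Nat.card {x : α // (x ≠ ⊥ ∧ x ≠ ⊤) ∧ (x < a ∨ a < x)} =
      Nat.card {y : Set.Iic a // y ≠ ⊥ ∧ y ≠ ⊤} + Nat.card {y : Set.Ici a // y ≠ ⊥ ∧ y ≠ ⊤} := by
  classical
  have hsplit : ∀ x : α,
      ((x ≠ ⊥ ∧ x ≠ ⊤) ∧ (x < a ∨ a < x)) ↔ ((x < a ∧ x ≠ ⊥) ∨ (a < x ∧ x ≠ ⊤)) := fun x =>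
    ⟨by rintro ⟨⟨hb, ht⟩, h | h⟩ <;> tauto,
      by rintro (⟨h, hb⟩ | ⟨h, ht⟩) <;> [exact ⟨⟨hb, h.trans_le le_top |>.ne⟩, .inl h⟩;
        exact ⟨⟨(bot_le.trans_lt h).ne', ht⟩, .inr h⟩]⟩
  have hdisj : Disjoint (fun x : α => x < a ∧ x ≠ ⊥) (fun x => a < x ∧ x ≠ ⊤) := by
    simp only [Pi.disjoint_iff, Prop.disjoint_iff]
    exact fun x ⟨⟨hxa, _⟩, hax, _⟩ => lt_asymm hxa hax
  rw [Nat.card_congr ((Equiv.subtypeEquivRight hsplit).trans (subtypeOrEquiv _ _ hdisj)),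
    Nat.card_sum, Nat.card_congr (ltNeBotEquivIic a), Nat.card_congr (gtNeTopEquivIci a)]

end NontrivialElements

theorem inDegree_eq_add {F V : Type*} [Field F] [AddCommGroup V] [Module F V]
    [Finite (Submodule F V)] (W : Submodule F V) :
    inDegree F W = Nat.card {U : Submodule F W // U ≠ ⊥ ∧ U ≠ ⊤} +
      Nat.card {U : Submodule F (V ⧸ W) // U ≠ ⊥ ∧ U ≠ ⊤} := by
  rw [inDegree, nat_card_comparable_ne_bot_and_ne_top, W.mapIic.nat_card_ne_bot_and_ne_top,
    (Submodule.comapMkQRelIso W).nat_card_ne_bot_and_ne_top]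

theorem gaussBinom_mul_prod_pow_sub_pow {q m i : ℕ} (hq : 1 < q) (hi : i ≤ m) :
    gaussBinom q m i * ∏ j ∈ range i, ((q : ℚ) ^ i - q ^ j) =
      ∏ j ∈ range i, ((q : ℚ) ^ m - q ^ j) := by
  have hq' : (1 : ℚ) < q := by exact_mod_cast hq
  have factor : ∀ r, i ≤ r → ∏ j ∈ range i, ((q : ℚ) ^ r - q ^ j) =
      (∏ j ∈ range i, (q : ℚ) ^ j) * ∏ j ∈ range i, ((q : ℚ) ^ (r - j) - 1) := fun r hr => by
    rw [← prod_mul_distrib]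
    refine prod_congr rfl fun j hj => ?_
    rw [mul_sub, mul_one, ← pow_add, Nat.add_sub_cancel' (by grind)]
  have reflect :
      ∏ j ∈ range i, ((q : ℚ) ^ (i - j) - 1) = ∏ j ∈ range i, ((q : ℚ) ^ (j + 1) - 1) := by
    rw [← prod_range_reflect]
    exact prod_congr rfl fun j hj => by rw [mem_range] at hj; congr 2; omega
  have hden : ∏ j ∈ range i, ((q : ℚ) ^ (j + 1) - 1) ≠ 0 :=
    prod_ne_zero_iff.mpr fun j _ => sub_ne_zero.mpr (one_lt_pow₀ hq' j.succ_ne_zero).ne'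
  rw [factor i le_rfl, factor m hi, reflect, gaussBinom, mul_left_comm, div_mul_cancel₀ _ hden,
    mul_comm]

section Counting

variable {F V : Type*} [Field F] [AddCommGroup V] [Module F V]

def spanOfLinearIndependent {i : ℕ} (s : {s : Fin i → V // LinearIndependent F s}) :
    {U : Submodule F V // finrank F U = i} :=
  ⟨Submodule.span F (Set.range s.1), by rw [finrank_span_eq_card s.2, Fintype.card_fin]⟩

def spanOfLinearIndependentFiberEquiv {i : ℕ} (U : {U : Submodule F V // finrank F U = i})
    [FiniteDimensional F U.1] :
    {s // spanOfLinearIndependent s = U} ≃ {t : Fin i → U.1 // LinearIndependent F t} where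
  toFun s := ⟨fun j => ⟨s.1.1 j,
      (congrArg Subtype.val s.2 : _ = U.1) ▸ Submodule.subset_span ⟨j, rfl⟩⟩,
    .of_comp U.1.subtype s.1.2⟩
  invFun t := ⟨⟨U.1.subtype ∘ t.1, t.2.map' _ U.1.ker_subtype⟩, Subtype.ext <|
    Submodule.eq_of_le_of_finrank_le (Submodule.span_le.mpr <| Set.range_subset_iff.mpr
      fun j => (t.1 j).2) (U.2.trans (spanOfLinearIndependent _).2.symm).le⟩
  left_inv _ := rfl
  right_inv _ := rfl

variable [Fintype F] [FiniteDimensional F V]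

theorem nat_card_finrank_eq_mul_prod {i : ℕ} (hi : i ≤ finrank F V) :
    Nat.card {U : Submodule F V // finrank F U = i} *
        ∏ j : Fin i, (Fintype.card F ^ i - Fintype.card F ^ j.1) =
      ∏ j : Fin i, (Fintype.card F ^ finrank F V - Fintype.card F ^ j.1) := by
  have : Finite V := Module.finite_of_finite F
  have : Fintype {U : Submodule F V // finrank F U = i} := Fintype.ofFinite _
  have fiber_card (U : {U : Submodule F V // finrank F U = i}) :
      Nat.card {s // spanOfLinearIndependent s = U} =
        ∏ j : Fin i, (Fintype.card F ^ i - Fintype.card F ^ j.1) := by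
    rw [Nat.card_congr (spanOfLinearIndependentFiberEquiv U), card_linearIndependent U.2.ge, U.2]
  rw [← card_linearIndependent hi,
    Nat.card_congr (Equiv.sigmaFiberEquiv spanOfLinearIndependent).symm, Nat.card_sigma,
    Fintype.sum_congr _ _ fiber_card, sum_const, card_univ, Nat.card_eq_fintype_card, smul_eq_mul]

theorem nat_card_finrank_eq_gaussBinom {i : ℕ} (hi : i ≤ finrank F V) :
    (Nat.card {U : Submodule F V // finrank F U = i} : ℚ) =
      gaussBinom (Fintype.card F) (finrank F V) i := by
  set q := Fintype.card F
  have hq : 1 < q := Fintype.one_lt_card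
  have cast_prod (r : ℕ) (hr : i ≤ r) :
      ((∏ j : Fin i, (q ^ r - q ^ j.1) : ℕ) : ℚ) = ∏ j ∈ range i, ((q : ℚ) ^ r - q ^ j) := by
    rw [Nat.cast_prod, Fin.prod_univ_eq_prod_range (fun j => ((q ^ r - q ^ j : ℕ) : ℚ))]
    refine prod_congr rfl fun j hj => ?_
    rw [Nat.cast_sub (Nat.pow_le_pow_right hq.le (by grind)), Nat.cast_pow, Nat.cast_pow]
  have hne : ∏ j ∈ range i, ((q : ℚ) ^ i - q ^ j) ≠ 0 := prod_ne_zero_iff.mpr fun j hj =>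
    sub_ne_zero.mpr (pow_lt_pow_right₀ (by exact_mod_cast hq) (mem_range.mp hj)).ne'
  apply mul_right_cancel₀ hne
  rw [gaussBinom_mul_prod_pow_sub_pow hq hi, ← cast_prod i le_rfl, ← cast_prod _ hi,
    ← Nat.cast_mul, nat_card_finrank_eq_mul_prod hi]

omit [Fintype F] in
theorem ne_bot_and_ne_top_iff_finrank_mem_Icc (U : Submodule F V) :
    U ≠ ⊥ ∧ U ≠ ⊤ ↔ finrank F U ∈ Icc 1 (finrank F V - 1) := by
  rw [mem_Icc, Nat.one_le_iff_ne_zero, Ne, ← Submodule.finrank_eq_zero]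
  refine and_congr_right fun hU => ⟨fun h => ?_, fun h htop => ?_⟩
  · have := Submodule.finrank_lt h; omega
  · rw [htop, finrank_top] at h hU; omega

theorem nat_card_ne_bot_and_ne_top_eq_sum_gaussBinom :
    (Nat.card {U : Submodule F V // U ≠ ⊥ ∧ U ≠ ⊤} : ℚ) =
      ∑ i ∈ Icc 1 (finrank F V - 1), gaussBinom (Fintype.card F) (finrank F V) i := by
  have : Finite V := Module.finite_of_finite F
  rw [Nat.card_congr (Equiv.subtypeEquivRight ne_bot_and_ne_top_iff_finrank_mem_Icc),
    nat_card_subtype_mem_eq_sum, Nat.cast_sum]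
  exact sum_congr rfl fun i hi => nat_card_finrank_eq_gaussBinom (by grind)

end Counting

theorem inclGraph_degree_formula_general
    (F V : Type*) [Field F] [Fintype F] [AddCommGroup V] [Module F V] [FiniteDimensional F V]
    (q n k : ℕ) (hq : Fintype.card F = q) (hn : Module.finrank F V = n)
    (W : Submodule F V) (hW : Module.finrank F W = k) :
    (inDegree F W : ℚ) =
      (∑ i ∈ Finset.Icc 1 (k - 1), gaussBinom q k i) +
      (∑ i ∈ Finset.Icc 1 (n - k - 1), gaussBinom q (n - k) i) := by
  have : Finite V := Module.finite_of_finite F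
  have hquot : finrank F (V ⧸ W) = n - k := by
    have := W.finrank_quotient_add_finrank
    omega
  subst hq
  rw [inDegree_eq_add, Nat.cast_add, nat_card_ne_bot_and_ne_top_eq_sum_gaussBinom,
    nat_card_ne_bot_and_ne_top_eq_sum_gaussBinom, hW, hquot]

/-- Degree formula in `In(V)` for a `k`-dimensional subspace `W` of an `n`-dimensional
vector space over the field with `q` elements. -/
theorem inclGraph_degree_formula
    (F V : Type*) [Field F] [Fintype F] [AddCommGroup V] [Module F V] [FiniteDimensional F V]
    (q n k : ℕ) (hq : Fintype.card F = q) (hn : Module.finrank F V = n) (h2 : 2 ≤ n)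
    (W : Submodule F V) (hW : Module.finrank F W = k) (hk1 : 1 ≤ k) (hk2 : k ≤ n - 1) :
    (inDegree F W : ℚ) =
      (∑ i ∈ Finset.Icc 1 (k - 1), gaussBinom q k i) +
      (∑ i ∈ Finset.Icc 1 (n - k - 1), gaussBinom q (n - k) i) :=
  inclGraph_degree_formula_general F V q n k hq hn W hW
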